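/- Let M be a positive integer, let λ be an integer with 0 ≤ λ and 2λ < M + 1 (i.e., λ < (M+1)/2), and let τ₁ be a rational number with τ₁ > (1/M)·Σ_{k=⌊(M+1)/2⌋−λ+1}^{M} ((k:ℚ) − (M+1)/2 + λ). Then (1/M)·Σ_{k=1}^{M} max((M+1)/2 − λ, (k:ℚ)) − τ₁ < (M+1)/2; that is, for a participant whose true state is the first state (g = 1), under this condition on τ₁ the expected utility of reporting the truth immediately strictly exceeds the expected utility of paying τ₁ to reveal the first payoff and then reporting optimally. -/
import Mathlib


open Finset in
/-- Proposition 3, second bullet (case `g = 1`, `lam < (M+1)/2`): if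
`τ₁ > (1/M)·∑_{k=⌊(M+1)/2⌋-λ+1}^{M} (k - (M+1)/2 + λ)`, then reporting the
truth immediately strictly beats paying `τ₁` to reveal the first (truthful)
payoff and then reporting optimally. -/
theorem truth_beats_revealing_g_eq_one
    (M : ℤ) (hM : 0 < M) (lam : ℤ) (hlam0 : 0 ≤ lam) (hlam : 2 * lam < M + 1)
    (τ : ℚ)
    (hτ : τ > (1 / (M : ℚ)) *
      ∑ k ∈ Icc (⌊((M : ℚ) + 1) / 2⌋ - lam + 1) M,
        ((k : ℚ) - ((M : ℚ) + 1) / 2 + (lam : ℚ))) :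
    (1 / (M : ℚ)) *
      (∑ k ∈ Icc (1 : ℤ) M, max (((M : ℚ) + 1) / 2 - (lam : ℚ)) (k : ℚ)) - τ
      < ((M : ℚ) + 1) / 2 := by
  set c : ℚ := ((M : ℚ) + 1) / 2 with hc
  set t : ℤ := ⌊c⌋ - lam with ht
  have hMQ : (0 : ℚ) < (M : ℚ) := by exact_mod_cast hM
  have hlamc : (lam : ℚ) < c := by
    rw [hc, lt_div_iff₀ (by norm_num : (0:ℚ) < 2)]
    have : (2 : ℚ) * (lam : ℚ) < (M : ℚ) + 1 := by exact_mod_cast hlam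
    linarith
  have hfl : (lam : ℤ) ≤ ⌊c⌋ := Int.le_floor.mpr hlamc.le
  have ht0 : 0 ≤ t := by omega
  have htM : t ≤ M := by
    have hcM : c ≤ (M : ℚ) := by
      rw [hc, div_le_iff₀ (by norm_num : (0:ℚ) < 2)]
      have : (1 : ℚ) ≤ (M : ℚ) := by exact_mod_cast hM
      linarith
    have : ⌊c⌋ ≤ ⌊(M : ℚ)⌋ := Int.floor_le_floor hcM
    simp [Int.floor_intCast] at this
    omega
  -- split the interval
  have hunion : Icc (1 : ℤ) M = Icc 1 t ∪ Icc (t + 1) M := by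
    ext x; simp only [mem_union, mem_Icc]; omega
  have hdisj : Disjoint (Icc (1 : ℤ) t) (Icc (t + 1) M) := by
    rw [Finset.disjoint_left]
    intro x hx hx'
    simp only [mem_Icc] at hx hx'
    omega
  have hfloor_le : ((⌊c⌋ : ℚ)) ≤ c := Int.floor_le c
  have hfloor_gt : c < (⌊c⌋ : ℚ) + 1 := Int.lt_floor_add_one c
  have h1 : ∀ k ∈ Icc (1 : ℤ) t, max (c - (lam : ℚ)) (k : ℚ) = c - (lam : ℚ) := by
    intro k hk
    simp only [mem_Icc] at hk
    apply max_eq_left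
    have : (k : ℚ) ≤ (t : ℚ) := by exact_mod_cast hk.2
    have : (t : ℚ) = (⌊c⌋ : ℚ) - (lam : ℚ) := by push_cast [ht]; ring
    have hk' : (k : ℚ) ≤ (⌊c⌋ : ℚ) - (lam : ℚ) := by
      rw [← this]; exact_mod_cast hk.2
    linarith
  have h2 : ∀ k ∈ Icc (t + 1) M, max (c - (lam : ℚ)) (k : ℚ) = (k : ℚ) := by
    intro k hk
    simp only [mem_Icc] at hk
    apply max_eq_right
    have hk' : (⌊c⌋ : ℚ) - (lam : ℚ) + 1 ≤ (k : ℚ) := by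
      have : ((⌊c⌋ - lam + 1 : ℤ) : ℚ) ≤ (k : ℚ) := by exact_mod_cast (ht ▸ hk.1)
      push_cast at this; linarith
    linarith
  have hsum : ∑ k ∈ Icc (1 : ℤ) M, max (c - (lam : ℚ)) (k : ℚ)
      = (t : ℚ) * (c - (lam : ℚ)) + ∑ k ∈ Icc (t + 1) M, (k : ℚ) := by
    rw [hunion, Finset.sum_union hdisj, Finset.sum_congr rfl h1,
      Finset.sum_congr rfl h2, Finset.sum_const, Int.card_Icc]
    congr 1
    rw [nsmul_eq_mul]
    congr 1
    have h : (((t + 1 - 1).toNat : ℤ)) = t := by omega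
    exact_mod_cast h
  have hcard : ((Icc (t + 1) M).card : ℚ) = (M : ℚ) - (t : ℚ) := by
    rw [Int.card_Icc]
    have h : (((M + 1 - (t + 1)).toNat : ℤ)) = M - t := by omega
    exact_mod_cast h
  have hS : ∑ k ∈ Icc (t + 1) M, ((k : ℚ) - c + (lam : ℚ))
      = (∑ k ∈ Icc (t + 1) M, (k : ℚ)) - ((M : ℚ) - (t : ℚ)) * (c - (lam : ℚ)) := by
    have : ∀ k ∈ Icc (t + 1) M, ((k : ℚ) - c + (lam : ℚ)) = (k : ℚ) - (c - (lam : ℚ)) := by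
      intro k _; ring
    rw [Finset.sum_congr rfl this, Finset.sum_sub_distrib, Finset.sum_const,
      nsmul_eq_mul, hcard]
  have hsum' : ∑ k ∈ Icc (1 : ℤ) M, max (c - (lam : ℚ)) (k : ℚ)
      = (M : ℚ) * (c - (lam : ℚ)) + ∑ k ∈ Icc (t + 1) M, ((k : ℚ) - c + (lam : ℚ)) := by
    rw [hsum, hS]; ring
  rw [hsum']
  have hlamQ : (0 : ℚ) ≤ (lam : ℚ) := by exact_mod_cast hlam0
  have key : (1 / (M : ℚ)) * ((M : ℚ) * (c - (lam : ℚ)) + ∑ k ∈ Icc (t + 1) M, ((k : ℚ) - c + (lam : ℚ)))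
      = c - (lam : ℚ) + (1 / (M : ℚ)) * ∑ k ∈ Icc (t + 1) M, ((k : ℚ) - c + (lam : ℚ)) := by
    field_simp
  rw [key]
  linarith [hτ]
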